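/- Let Σ_{n≥0} κ_n q^n be the unique formal power series over ℝ satisfying q·f² = (q² + q − 1)·f + 1. For every real q with 0 < q < R_*, the series Σ_{n≥0} κ_n q^n converges and its sum equals (q² + q − 1 + √((q² + 3q + 1)(q² − q + 1))) / (2q). -/

import Mathlib

/-- `R_* = (3 − √5)/2`. -/
noncomputable def Rstar : ℝ := (3 - Real.sqrt 5) / 2

/-!
The closed form is the value at `q` of the branch
`G z = 2 / (√((z² + 3z + 1)(z² − z + 1)) − (z² + z − 1))` of the root of `z G² = (z² + z − 1) G + 1`,
which is holomorphic on the disc `‖z‖ < R_*` (`-R_*` is the root of `z² + 3z + 1` nearest to `0`).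
Its Taylor series converges there, absolutely, so sums and Cauchy products of these series sum to
the corresponding combinations of `G`; by uniqueness of power series expansions the Taylor series
then satisfies the functional equation formally. That equation has only one formal solution, so the
Taylor series of `G` is `[φ]_q`.
-/

open scoped ENNReal

theorem RCLike.exists_norm_between {𝕜 : Type*} [RCLike 𝕜] {z : 𝕜} {r : ℝ}
    (hz : ‖z‖ < r) : ∃ w : 𝕜, ‖z‖ < ‖w‖ ∧ ‖w‖ < r := by
  refine ⟨((‖z‖ + r) / 2 : ℝ), ?_⟩
  have := norm_nonneg z
  rw [RCLike.norm_ofReal, abs_of_nonneg (by linarith)]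
  constructor <;> linarith

namespace PowerSeries

variable {𝕜 : Type*} [RCLike 𝕜]

def HasSumOnBall (φ : 𝕜⟦X⟧) (g : 𝕜 → 𝕜) (r : ℝ) : Prop :=
  ∀ z : 𝕜, ‖z‖ < r → HasSum (fun n => coeff n φ * z ^ n) (g z)

theorem hasSumOnBall_one (r : ℝ) : HasSumOnBall (1 : 𝕜⟦X⟧) (fun _ => 1) r := fun z _ => by
  convert hasSum_ite_eq 0 (1 : 𝕜) using 2 with n
  split_ifs with hn <;> simp [coeff_one, hn]

theorem hasSumOnBall_X (r : ℝ) : HasSumOnBall (X : 𝕜⟦X⟧) (fun z => z) r := fun z _ => by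
  convert hasSum_ite_eq 1 z using 2 with n
  split_ifs with hn <;> simp [coeff_X, hn]

namespace HasSumOnBall

variable {φ ψ : 𝕜⟦X⟧} {g h : 𝕜 → 𝕜} {r : ℝ}

theorem le_radius (hφ : HasSumOnBall φ g r) {w : 𝕜} (hw : ‖w‖ < r) :
    (‖w‖₊ : ℝ≥0∞) ≤ (FormalMultilinearSeries.ofScalars 𝕜 fun n => coeff n φ).radius :=
  FormalMultilinearSeries.le_radius_of_tendsto _ (l := 0) <| by
    simpa [FormalMultilinearSeries.ofScalars_norm] using
      (hφ w hw).summable.tendsto_atTop_zero.norm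

theorem summable_norm (hφ : HasSumOnBall φ g r) {z : 𝕜} (hz : ‖z‖ < r) :
    Summable fun n => ‖coeff n φ * z ^ n‖ := by
  obtain ⟨w, hzw, hwr⟩ := RCLike.exists_norm_between hz
  have := FormalMultilinearSeries.summable_norm_apply _ (x := z) <| by
    rw [Metric.mem_eball, edist_zero_right]
    exact lt_of_lt_of_le (by exact_mod_cast hzw) (hφ.le_radius hwr)
  simpa [FormalMultilinearSeries.ofScalars_apply_eq, mul_comm] using this

theorem add (hφ : HasSumOnBall φ g r) (hψ : HasSumOnBall ψ h r) :
    HasSumOnBall (φ + ψ) (fun z => g z + h z) r := fun z hz => by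
  simpa only [map_add, add_mul] using (hφ z hz).add (hψ z hz)

theorem sub (hφ : HasSumOnBall φ g r) (hψ : HasSumOnBall ψ h r) :
    HasSumOnBall (φ - ψ) (fun z => g z - h z) r := fun z hz => by
  simpa only [map_sub, sub_mul] using (hφ z hz).sub (hψ z hz)

open Finset in
theorem mul (hφ : HasSumOnBall φ g r) (hψ : HasSumOnBall ψ h r) :
    HasSumOnBall (φ * ψ) (fun z => g z * h z) r := fun z hz => by
  have hφz := hφ.summable_norm hz
  have hψz := hψ.summable_norm hz
  have hcoeff : ∀ n, coeff n (φ * ψ) * z ^ n =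
      ∑ kl ∈ antidiagonal n, coeff kl.1 φ * z ^ kl.1 * (coeff kl.2 ψ * z ^ kl.2) := by
    intro n
    rw [coeff_mul, sum_mul]
    refine sum_congr rfl fun kl hkl => ?_
    rw [← mem_antidiagonal.mp hkl, pow_add]
    ring
  simp_rw [hcoeff, ← (hφ z hz).tsum_eq, ← (hψ z hz).tsum_eq,
    tsum_mul_tsum_eq_tsum_sum_antidiagonal_of_summable_norm hφz hψz]
  exact (summable_norm_sum_mul_antidiagonal_of_summable_norm hφz hψz).of_norm.hasSum

theorem eq_zero (hr : 0 < r) (hφ : HasSumOnBall φ (fun _ => 0) r) : φ = 0 := by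
  obtain ⟨w, hw0, hwr⟩ := RCLike.exists_norm_between (z := (0 : 𝕜)) (by simpa using hr)
  let p := FormalMultilinearSeries.ofScalars 𝕜 fun n => coeff n φ
  have hp : HasFPowerSeriesOnBall (fun _ => (0 : 𝕜)) p 0 ‖w‖₊ := by
    refine ⟨hφ.le_radius hwr, by simpa using hw0, fun {y} hy => ?_⟩
    rw [Metric.mem_eball, edist_zero_right, enorm_lt_coe, ← NNReal.coe_lt_coe,
      coe_nnnorm, coe_nnnorm] at hy
    simpa [p, FormalMultilinearSeries.ofScalars_apply_eq, mul_comm] using hφ y (hy.trans hwr)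
  ext n
  exact congrFun
    ((FormalMultilinearSeries.ofScalars_series_eq_zero _).mp hp.hasFPowerSeriesAt.eq_zero) n

theorem unique (hr : 0 < r) (hφ : HasSumOnBall φ g r) (hψ : HasSumOnBall ψ h r)
    (hgh : ∀ z : 𝕜, ‖z‖ < r → g z = h z) : φ = ψ :=
  sub_eq_zero.mp <| eq_zero hr fun z hz => by
    simpa [hgh z hz] using hφ.sub hψ z hz

end HasSumOnBall

open Nat in
theorem hasSumOnBall_taylorSeries {g : ℂ → ℂ} {r : ℝ}
    (hg : DifferentiableOn ℂ g (Metric.ball 0 r)) :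
    HasSumOnBall (mk fun n => iteratedDeriv n g 0 / n !) g r := fun z hz => by
  have h := Complex.hasSum_taylorSeries_on_ball hg (z := z) (by simpa using hz)
  simp only [sub_zero, smul_eq_mul] at h
  have hterm : ∀ n : ℕ, coeff n (mk fun n => iteratedDeriv n g 0 / n !) * z ^ n =
      (n ! : ℂ)⁻¹ * (z ^ n * iteratedDeriv n g 0) := fun n => by
    rw [coeff_mk]
    ring
  simpa only [hterm] using h

end PowerSeries

open PowerSeries

def IsQGoldenSeries {R : Type*} [CommRing R] (f : R⟦X⟧) : Prop :=
  X * f ^ 2 = (X ^ 2 + X - 1) * f + 1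

theorem IsQGoldenSeries.map {R S : Type*} [CommRing R] [CommRing S] {f : R⟦X⟧}
    (hf : IsQGoldenSeries f) (φ : R →+* S) : IsQGoldenSeries (PowerSeries.map φ f) := by
  simpa [IsQGoldenSeries] using congrArg (PowerSeries.map φ) hf

theorem IsQGoldenSeries.unique {R : Type*} [CommRing R] [IsDomain R] {f g : R⟦X⟧}
    (hf : IsQGoldenSeries f) (hg : IsQGoldenSeries g) : f = g := by
  have hfactor : (f - g) * (X * (f + g) - (X ^ 2 + X - 1)) = 0 := by
    unfold IsQGoldenSeries at hf hg
    linear_combination hf - hg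
  have hunit : X * (f + g) - (X ^ 2 + X - 1) ≠ 0 := fun h => by
    simpa using congrArg constantCoeff h
  exact sub_eq_zero.mp ((mul_eq_zero.mp hfactor).resolve_right hunit)

theorem Rstar_sq : Rstar ^ 2 = 3 * Rstar - 1 := by
  unfold Rstar; nlinarith [Real.sq_sqrt (show (0 : ℝ) ≤ 5 by norm_num)]

theorem Rstar_pos : 0 < Rstar := by
  unfold Rstar; nlinarith [Real.sq_sqrt (show (0 : ℝ) ≤ 5 by norm_num), Real.sqrt_nonneg 5]

theorem Rstar_lt_half : Rstar < 1 / 2 := by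
  unfold Rstar; nlinarith [Real.sq_sqrt (show (0 : ℝ) ≤ 5 by norm_num), Real.sqrt_nonneg 5]

theorem Complex.re_sq_add_im_sq_lt_and_neg_lt_re {z : ℂ} {r : ℝ} (hz : ‖z‖ < r) :
    z.re ^ 2 + z.im ^ 2 < r ^ 2 ∧ -r < z.re := by
  refine ⟨?_, neg_lt_of_abs_lt ((Complex.abs_re_le_norm z).trans_lt hz)⟩
  calc z.re ^ 2 + z.im ^ 2 = ‖z‖ ^ 2 := by rw [Complex.sq_norm, Complex.normSq_apply]; ring
    _ < r ^ 2 := pow_lt_pow_left₀ hz (norm_nonneg z) two_ne_zero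

section

variable {z : ℂ}

theorem re_sq_add_three_mul_add_one_pos (hz : ‖z‖ < Rstar) : 0 < (z ^ 2 + 3 * z + 1).re := by
  obtain ⟨hnorm, hre⟩ := Complex.re_sq_add_im_sq_lt_and_neg_lt_re hz
  have : (z ^ 2 + 3 * z + 1).re = z.re ^ 2 - z.im ^ 2 + 3 * z.re + 1 := by simp [sq]
  -- `x² − y² + 3x + 1 > 2x² + 3x + 1 − R_*² = (x + R_*)(2x + 3 − 2R_*)`, as `R_*² = 3R_* − 1`
  nlinarith [Rstar_sq, Rstar_lt_half]

theorem re_sq_sub_add_one_pos (hz : ‖z‖ < Rstar) : 0 < (z ^ 2 - z + 1).re := by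
  obtain ⟨hnorm, hre⟩ := Complex.re_sq_add_im_sq_lt_and_neg_lt_re hz
  have : (z ^ 2 - z + 1).re = z.re ^ 2 - z.im ^ 2 - z.re + 1 := by simp [sq]
  nlinarith [Rstar_pos, Rstar_lt_half, sq_nonneg (z.re - 1 / 4)]

/-- Both factors have positive real part on the disc `‖z‖ < R_*`, so this square root of
`(z² + 3z + 1)(z² − z + 1)` is holomorphic there. -/
noncomputable def qGoldenSqrt (z : ℂ) : ℂ :=
  (z ^ 2 + 3 * z + 1) ^ (2⁻¹ : ℂ) * (z ^ 2 - z + 1) ^ (2⁻¹ : ℂ)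

/-- `(z² + z − 1 + √((z² + 3z + 1)(z² − z + 1))) / (2z)` with rationalised numerator, which
removes the singularity at `0`. -/
noncomputable def qGoldenFun (z : ℂ) : ℂ :=
  2 / (qGoldenSqrt z - (z ^ 2 + z - 1))

theorem qGoldenSqrt_sq : qGoldenSqrt z ^ 2 = (z ^ 2 + z - 1) ^ 2 + 4 * z := by
  rw [qGoldenSqrt, mul_pow, Complex.cpow_ofNat_inv_pow, Complex.cpow_ofNat_inv_pow]
  ring

theorem qGoldenSqrt_ofReal {q : ℝ} (hq : 0 ≤ q) :
    qGoldenSqrt q = Real.sqrt ((q ^ 2 + 3 * q + 1) * (q ^ 2 - q + 1)) := by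
  have h₁ : 0 ≤ q ^ 2 + 3 * q + 1 := by positivity
  have h₂ : 0 ≤ q ^ 2 - q + 1 := by nlinarith [sq_nonneg (q - 1)]
  rw [Real.sqrt_mul h₁, Real.sqrt_eq_rpow, Real.sqrt_eq_rpow, qGoldenSqrt]
  push_cast [Complex.ofReal_cpow h₁, Complex.ofReal_cpow h₂]
  norm_num

theorem qGoldenSqrt_zero : qGoldenSqrt 0 = 1 := by
  simpa using qGoldenSqrt_ofReal le_rfl

theorem qGoldenSqrt_sub_ne_zero : qGoldenSqrt z - (z ^ 2 + z - 1) ≠ 0 := by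
  intro h
  have hz : z = 0 := by
    have := qGoldenSqrt_sq (z := z)
    rw [sub_eq_zero.mp h] at this
    simpa using this
  subst hz
  norm_num [qGoldenSqrt_zero] at h

theorem qGoldenFun_quadratic : z * qGoldenFun z ^ 2 = (z ^ 2 + z - 1) * qGoldenFun z + 1 := by
  have hne := qGoldenSqrt_sub_ne_zero (z := z)
  rw [qGoldenFun, div_pow, mul_div_assoc', mul_div_assoc', div_add_one hne,
    div_eq_div_iff (pow_ne_zero 2 hne) hne]
  linear_combination (-(qGoldenSqrt z - (z ^ 2 + z - 1))) * qGoldenSqrt_sq (z := z)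

theorem qGoldenFun_ofReal {q : ℝ} (hq : 0 < q) (hqR : q < Rstar) :
    qGoldenFun q =
      ((q ^ 2 + q - 1 + Real.sqrt ((q ^ 2 + 3 * q + 1) * (q ^ 2 - q + 1))) / (2 * q) : ℝ) := by
  have hD : 0 ≤ (q ^ 2 + 3 * q + 1) * (q ^ 2 - q + 1) := by nlinarith [sq_nonneg (q - 1)]
  set s := Real.sqrt ((q ^ 2 + 3 * q + 1) * (q ^ 2 - q + 1))
  have hs : s ^ 2 = (q ^ 2 + 3 * q + 1) * (q ^ 2 - q + 1) := Real.sq_sqrt hD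
  have hden : s - (q ^ 2 + q - 1) ≠ 0 := by
    nlinarith [Real.sqrt_nonneg ((q ^ 2 + 3 * q + 1) * (q ^ 2 - q + 1)), Rstar_lt_half]
  rw [qGoldenFun, qGoldenSqrt_ofReal hq.le]
  push_cast
  rw [div_eq_div_iff (by exact_mod_cast hden)
    (mul_ne_zero two_ne_zero (by exact_mod_cast hq.ne'))]
  have : (s : ℂ) ^ 2 = ((q ^ 2 + 3 * q + 1) * (q ^ 2 - q + 1) : ℝ) := by exact_mod_cast hs
  push_cast at this
  linear_combination (-1 : ℂ) * this

theorem differentiableOn_qGoldenFun : DifferentiableOn ℂ qGoldenFun (Metric.ball 0 Rstar) := by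
  intro z hz
  rw [mem_ball_zero_iff] at hz
  have h₁ : DifferentiableAt ℂ (fun w : ℂ => (w ^ 2 + 3 * w + 1) ^ (2⁻¹ : ℂ)) z :=
    DifferentiableAt.cpow_const (by fun_prop)
      (Complex.mem_slitPlane_iff.mpr (.inl (re_sq_add_three_mul_add_one_pos hz)))
  have h₂ : DifferentiableAt ℂ (fun w : ℂ => (w ^ 2 - w + 1) ^ (2⁻¹ : ℂ)) z :=
    DifferentiableAt.cpow_const (by fun_prop)
      (Complex.mem_slitPlane_iff.mpr (.inl (re_sq_sub_add_one_pos hz)))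
  have h₃ : DifferentiableAt ℂ qGoldenSqrt z := h₁.mul h₂
  have h₄ : DifferentiableAt ℂ (fun w => qGoldenSqrt w - (w ^ 2 + w - 1)) z :=
    h₃.sub (by fun_prop)
  exact ((differentiableAt_const 2).div h₄ qGoldenSqrt_sub_ne_zero).differentiableWithinAt

end

theorem isQGoldenSeries_of_hasSumOnBall {A : ℂ⟦X⟧} (hA : HasSumOnBall A qGoldenFun Rstar) :
    IsQGoldenSeries A := by
  have hX := hasSumOnBall_X (𝕜 := ℂ) Rstar
  have h1 := hasSumOnBall_one (𝕜 := ℂ) Rstar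
  rw [IsQGoldenSeries, sq, sq]
  exact HasSumOnBall.unique Rstar_pos (hX.mul (hA.mul hA))
    ((((hX.mul hX).add hX).sub h1).mul hA |>.add h1)
    fun z _ => by linear_combination qGoldenFun_quadratic (z := z)

theorem qGoldenRatio_sum_formula
    (f : PowerSeries ℝ)
    (hf : PowerSeries.X * f ^ 2 = (PowerSeries.X ^ 2 + PowerSeries.X - 1) * f + 1) :
    ∀ q : ℝ, 0 < q → q < Rstar →
      HasSum (fun n : ℕ => PowerSeries.coeff n f * q ^ n)
        ((q ^ 2 + q - 1 + Real.sqrt ((q ^ 2 + 3 * q + 1) * (q ^ 2 - q + 1))) / (2 * q)) := by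
  intro q hq hqR
  have hA := hasSumOnBall_taylorSeries differentiableOn_qGoldenFun
  have hfA : map (algebraMap ℝ ℂ) f = _ :=
    (IsQGoldenSeries.map hf _).unique (isQGoldenSeries_of_hasSumOnBall hA)
  have hsum := hA q (by rwa [Complex.norm_real, Real.norm_of_nonneg hq.le])
  rw [← hfA, qGoldenFun_ofReal hq hqR] at hsum
  simp only [coeff_map, Complex.coe_algebraMap] at hsum
  exact_mod_cast hsum
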